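/- arXiv:2111.09750 — 2 statements merged into one kernel-verified Lean document; each statement's English description precedes it below -/
import Mathlib

section
/- Let P(x) ∈ ℝ^{m×n} be defined rowwise by: P(x)_k = B_k if x_{k₁} = x_{k₂}; P(x)_k = e_{k₂}^T if x_{k₁} = −x_{k₂} ≠ x_{k₂} or |x_{k₁}| < |x_{k₂}|; P(x)_k = −e_{k₁}^T if |x_{k₁}| > |x_{k₂}|. Then for all x ∈ ℝⁿ, sign(Bx) = P(x) sign(x), where sign acts elementwise. -/
open Matrix

lemma sign_sub_case2 (a b : ℝ) (hne : a ≠ b) (h : a = -b ∨ |a| < |b|) :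
    Real.sign (b - a) = Real.sign b := by
  rcases h with h | h
  · subst h
    have hb : b ≠ 0 := by intro h; apply hne; simp [h]
    rcases lt_trichotomy b 0 with hb' | hb' | hb'
    · rw [Real.sign_of_neg hb', Real.sign_of_neg (by linarith)]
    · exact absurd hb' hb
    · rw [Real.sign_of_pos hb', Real.sign_of_pos (by linarith)]
  · have h1 := abs_lt.mp h
    rcases lt_trichotomy b 0 with hb' | hb' | hb'
    · rw [Real.sign_of_neg hb', Real.sign_of_neg]
      rw [abs_of_neg hb'] at h1; linarith [le_abs_self a, neg_abs_le a]
    · simp [hb', abs_nonneg] at h; linarith [abs_nonneg a]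
    · rw [Real.sign_of_pos hb', Real.sign_of_pos]
      rw [abs_of_pos hb'] at h1; linarith [le_abs_self a, neg_abs_le a]

lemma sign_sub_case3 (a b : ℝ) (h : |b| < |a|) :
    Real.sign (b - a) = - Real.sign a := by
  have h1 := abs_lt.mp h
  rcases lt_trichotomy a 0 with ha | ha | ha
  · rw [Real.sign_of_neg ha, Real.sign_of_pos]
    · ring
    · rw [abs_of_neg ha] at h1; linarith [le_abs_self b, neg_abs_le b]
  · simp [ha] at h; linarith [abs_nonneg b]
  · rw [Real.sign_of_pos ha, Real.sign_of_neg]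
    rw [abs_of_pos ha] at h1; linarith [le_abs_self b, neg_abs_le b]

theorem sign_Bx_eq_P_sign_x (n m : ℕ)
    (k₁ k₂ : Fin m → Fin n)
    (B : Matrix (Fin m) (Fin n) ℝ)
    (hB : ∀ k i, B k i = (if i = k₂ k then (1 : ℝ) else 0) - (if i = k₁ k then 1 else 0))
    (P : (Fin n → ℝ) → Matrix (Fin m) (Fin n) ℝ)
    (hP : ∀ x k i, P x k i =
      if x (k₁ k) = x (k₂ k) then B k i
      else if (x (k₁ k) = -x (k₂ k)) ∨ |x (k₁ k)| < |x (k₂ k)| then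
        (if i = k₂ k then 1 else 0)
      else if |x (k₁ k)| > |x (k₂ k)| then (if i = k₁ k then -1 else 0)
      else 0)
    (x : Fin n → ℝ) :
    (fun k => Real.sign (B.mulVec x k)) = (P x).mulVec (fun i => Real.sign (x i)) := by
  funext k
  have hBx : ∀ (v : Fin n → ℝ), B.mulVec v k = v (k₂ k) - v (k₁ k) := by
    intro v
    simp [mulVec, dotProduct, hB, sub_mul, ite_mul, Finset.sum_sub_distrib,
      Finset.sum_ite_eq']
  set a := x (k₁ k) with ha
  set b := x (k₂ k) with hb
  rw [hBx x]
  by_cases h1 : a = b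
  · have hP' : ∀ i, P x k i = B k i := fun i => by rw [hP]; simp [← ha, ← hb, h1]
    have : (P x).mulVec (fun i => Real.sign (x i)) k
        = Real.sign b - Real.sign a := by
      simp only [mulVec, dotProduct, hP']
      simpa [mulVec, dotProduct] using hBx (fun i => Real.sign (x i))
    rw [this, show b - a = 0 by rw [h1]; ring, h1]
    simp
  · by_cases h2 : (a = -b) ∨ |a| < |b|
    · have hP' : ∀ i, P x k i = (if i = k₂ k then 1 else 0) := fun i => by
        rw [hP]; simp [← ha, ← hb, h1, h2]
      have : (P x).mulVec (fun i => Real.sign (x i)) k = Real.sign b := by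
        simp [mulVec, dotProduct, hP', ite_mul, Finset.sum_ite_eq', ← hb]
      rw [this, sign_sub_case2 a b h1 h2]
    · have h3 : |b| < |a| := by
        push_neg at h2
        rcases lt_or_eq_of_le h2.2 with h | h
        · exact h
        · exfalso
          rcases abs_eq_abs.mp h.symm with h' | h'
          · exact h1 h'
          · exact h2.1 h'
      have hP' : ∀ i, P x k i = (if i = k₁ k then -1 else 0) := fun i => by
        rw [hP]; simp [← ha, ← hb, h1, h2, h3]
      have : (P x).mulVec (fun i => Real.sign (x i)) k = - Real.sign a := by
        simp [mulVec, dotProduct, hP', ite_mul, Finset.sum_ite_eq', ← ha]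
      rw [this, sign_sub_case3 a b h3]
end

section
/- Suppose the p-Laplacian eigenproblem B^T D^w Φ_p(Bx) = λ Φ_p(x) has a solution (λ*, x*) with x* ≠ 0. Then the vector y* = sign(x*) is a nonzero solution of the generalized eigenvalue problem N' y = λ* R' y, where N' = B^T D^w diag(|Bx*|)^{p−1} P(x*) and R' = diag(|x*|)^{p−1}; in particular y* has all entries in {−1, 0, 1}. -/
open Matrix

private lemma sign_sub_abs_lt {a b : ℝ} (h : |a| < |b|) :
    Real.sign (b - a) = Real.sign b := by
  rcases lt_trichotomy b 0 with hb | hb | hb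
  · rw [Real.sign_of_neg hb, Real.sign_of_neg]
    have h1 := neg_abs_le a
    have h2 : |b| = -b := abs_of_neg hb
    linarith
  · simp [hb, abs_nonneg] at h; linarith [abs_nonneg a]
  · rw [Real.sign_of_pos hb, Real.sign_of_pos]
    have h1 := le_abs_self a
    have h2 : |b| = b := abs_of_pos hb
    linarith

private lemma sign_sub_abs_gt {a b : ℝ} (h : |b| < |a|) :
    Real.sign (b - a) = -Real.sign a := by
  rcases lt_trichotomy a 0 with ha | ha | ha
  · rw [Real.sign_of_neg ha, Real.sign_of_pos]
    · ring
    have h1 := neg_abs_le b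
    have h2 : |a| = -a := abs_of_neg ha
    linarith
  · simp [ha] at h; linarith [abs_nonneg b]
  · rw [Real.sign_of_pos ha, Real.sign_of_neg]
    have h1 := le_abs_self b
    have h2 : |a| = a := abs_of_pos ha
    linarith

theorem signed_eigenvector_necessary_condition (n m : ℕ) (p : ℝ)
    (k₁ k₂ : Fin m → Fin n)
    (B : Matrix (Fin m) (Fin n) ℝ)
    (hB : ∀ k i, B k i = (if i = k₂ k then (1 : ℝ) else 0) - (if i = k₁ k then 1 else 0))
    (Dw : Matrix (Fin m) (Fin m) ℝ) (d : Fin m → ℝ) (hDw : Dw = Matrix.diagonal d)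
    (P : (Fin n → ℝ) → Matrix (Fin m) (Fin n) ℝ)
    (hP : ∀ x k i, P x k i =
      if x (k₁ k) = x (k₂ k) then B k i
      else if (x (k₁ k) = -x (k₂ k)) ∨ |x (k₁ k)| < |x (k₂ k)| then
        (if i = k₂ k then 1 else 0)
      else if |x (k₁ k)| > |x (k₂ k)| then (if i = k₁ k then -1 else 0)
      else 0)
    (lam : ℝ) (xs : Fin n → ℝ) (hxs : xs ≠ 0)
    (heig : (Bᵀ * Dw).mulVec
        (fun k => |B.mulVec xs k| ^ (p - 1) * Real.sign (B.mulVec xs k)) =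
      fun i => lam * (|xs i| ^ (p - 1) * Real.sign (xs i))) :
    (fun i => Real.sign (xs i)) ≠ 0 ∧
    (∀ i, Real.sign (xs i) = -1 ∨ Real.sign (xs i) = 0 ∨ Real.sign (xs i) = 1) ∧
    (Bᵀ * Dw * Matrix.diagonal (fun k => |B.mulVec xs k| ^ (p - 1)) * P xs).mulVec
        (fun i => Real.sign (xs i)) =
      lam • (Matrix.diagonal (fun i => |xs i| ^ (p - 1))).mulVec
        (fun i => Real.sign (xs i)) := by
  have hBx : ∀ k, B.mulVec xs k = xs (k₂ k) - xs (k₁ k) := by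
    intro k
    simp only [Matrix.mulVec, dotProduct, hB, sub_mul, one_mul, zero_mul,
      ite_mul, Finset.sum_sub_distrib, Finset.sum_ite_eq', Finset.mem_univ, if_true]
  -- key: P xs applied to sign vector gives sign of B x
  have hkey : (P xs).mulVec (fun i => Real.sign (xs i)) =
      fun k => Real.sign (B.mulVec xs k) := by
    funext k
    rw [show ((P xs).mulVec fun i => Real.sign (xs i)) k
        = ∑ i, P xs k i * Real.sign (xs i) from rfl, hBx k]
    by_cases h1 : xs (k₁ k) = xs (k₂ k)
    · simp only [hP, h1, if_true, hB, sub_mul, one_mul, zero_mul, ite_mul,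
        Finset.sum_sub_distrib, Finset.sum_ite_eq', Finset.mem_univ, if_true]
      simp
    · by_cases h2 : xs (k₁ k) = -xs (k₂ k) ∨ |xs (k₁ k)| < |xs (k₂ k)|
      · simp only [hP, h1, if_false, h2, if_true, ite_mul, one_mul, zero_mul,
          Finset.sum_ite_eq', Finset.mem_univ]
        rcases h2 with h2 | h2
        · rw [h2]
          have hb : xs (k₂ k) ≠ 0 := by
            intro h0; apply h1; rw [h2, h0, neg_zero]
          have h2b : xs (k₂ k) - -xs (k₂ k) = 2 * xs (k₂ k) := by ring
          rw [h2b]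
          rcases lt_trichotomy (xs (k₂ k)) 0 with hc | hc | hc
          · rw [Real.sign_of_neg hc, Real.sign_of_neg (by linarith)]
          · exact absurd hc hb
          · rw [Real.sign_of_pos hc, Real.sign_of_pos (by linarith)]
        · exact (sign_sub_abs_lt h2).symm
      · have h2' := h2
        push_neg at h2'
        have h3 : |xs (k₂ k)| < |xs (k₁ k)| := by
          rcases h2'.2.lt_or_eq with h | h
          · exact h
          · exfalso
            rcases abs_eq_abs.mp h.symm with h | h
            · exact h1 h
            · exact h2'.1 (by linarith)
        simp only [hP, h1, if_false, h2, gt_iff_lt, h3, if_true, ite_mul,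
          neg_one_mul, zero_mul, Finset.sum_ite_eq', Finset.mem_univ]
        rw [sign_sub_abs_gt h3]
  refine ⟨?_, ?_, ?_⟩
  · intro h
    apply hxs
    funext i
    have := congrFun h i
    simp only [Pi.zero_apply] at this ⊢
    exact Real.sign_eq_zero_iff.mp this
  · intro i
    rcases lt_trichotomy (xs i) 0 with h | h | h
    · left; exact Real.sign_of_neg h
    · right; left; rw [h, Real.sign_zero]
    · right; right; exact Real.sign_of_pos h
  · have hsplit : (Bᵀ * Dw * Matrix.diagonal (fun k => |B.mulVec xs k| ^ (p - 1)) * P xs).mulVec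
          (fun i => Real.sign (xs i)) =
        (Bᵀ * Dw).mulVec ((Matrix.diagonal (fun k => |B.mulVec xs k| ^ (p - 1))).mulVec
          ((P xs).mulVec (fun i => Real.sign (xs i)))) := by
      rw [Matrix.mulVec_mulVec, Matrix.mulVec_mulVec, Matrix.mul_assoc, Matrix.mul_assoc]
    rw [hsplit, hkey]
    have hdiag : (Matrix.diagonal (fun k => |B.mulVec xs k| ^ (p - 1))).mulVec
        (fun k => Real.sign (B.mulVec xs k)) =
        fun k => |B.mulVec xs k| ^ (p - 1) * Real.sign (B.mulVec xs k) := by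
      funext k; simp [Matrix.mulVec_diagonal]
    rw [hdiag, heig]
    funext i
    simp [Matrix.mulVec_diagonal, mul_comm, mul_assoc, mul_left_comm]
end
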